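/- A quadratic edge has at most two tangent points whose tangent line passes through the origin: for edge nodes a, b, c ∈ ℝ², if the three determinants aₓ b_y − a_y bₓ, aₓ c_y − a_y cₓ, and bₓ c_y − b_y cₓ are not all zero, then the set {γ ∈ ℝ : x(γ)·y′(γ) = y(γ)·x′(γ)} has at most two elements, where the prime denotes differentiation with respect to γ. -/

import Mathlib

/-- The second-order edge shape functions. -/
noncomputable def J₁ (γ : ℝ) : ℝ := 2*γ^2 - 3*γ + 1
noncomputable def J₂ (γ : ℝ) : ℝ := 2*γ^2 - γ
noncomputable def J₃ (γ : ℝ) : ℝ := -4*γ^2 + 4*γ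

/-- The quadratic edge parametrization through nodes `a`, `b`, `c` in `ℝ²`. -/
noncomputable def e (a b c : ℝ × ℝ) (γ : ℝ) : ℝ × ℝ :=
  J₁ γ • a + J₂ γ • b + J₃ γ • c

/-- The `x`-component of the quadratic edge parametrization. -/
noncomputable def ex (a b c : ℝ × ℝ) (γ : ℝ) : ℝ := (e a b c γ).1

/-- The `y`-component of the quadratic edge parametrization. -/
noncomputable def ey (a b c : ℝ × ℝ) (γ : ℝ) : ℝ := (e a b c γ).2

/-!
The cubic terms of `x y' - y x'` cancel, so the tangency condition is a quadratic equation in `γ`.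
Its coefficients are an invertible linear transformation of the three determinants, hence
not all zero, and a nonzero polynomial of degree at most two has at most two roots.
-/

lemma quadratic_coeffs_eq_zero_of_three_roots {R : Type*} [CommRing R] [IsDomain R]
    {A B C u v w : R} (huv : u ≠ v) (huw : u ≠ w) (hvw : v ≠ w)
    (hu : A * u ^ 2 + B * u + C = 0) (hv : A * v ^ 2 + B * v + C = 0)
    (hw : A * w ^ 2 + B * w + C = 0) :
    A = 0 ∧ B = 0 ∧ C = 0 := by
  have huv' : A * (u + v) + B = 0 :=
    (mul_eq_zero.1 (by linear_combination hu - hv : (u - v) * (A * (u + v) + B) = 0)).resolve_left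
      (sub_ne_zero.2 huv)
  have huw' : A * (u + w) + B = 0 :=
    (mul_eq_zero.1 (by linear_combination hu - hw : (u - w) * (A * (u + w) + B) = 0)).resolve_left
      (sub_ne_zero.2 huw)
  have hA : A = 0 :=
    (mul_eq_zero.1 (by linear_combination huv' - huw' : (v - w) * A = 0)).resolve_left
      (sub_ne_zero.2 hvw)
  have hB : B = 0 := by linear_combination huv' - (u + v) * hA
  exact ⟨hA, hB, by linear_combination hu - u ^ 2 * hA - u * hB⟩

lemma exists_roots_subset_pair_of_quadratic {R : Type*} [CommRing R] [IsDomain R]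
    {A B C : R} (h : ¬ (A = 0 ∧ B = 0 ∧ C = 0)) :
    ∃ x₁ x₂ : R, {x | A * x ^ 2 + B * x + C = 0} ⊆ {x₁, x₂} := by
  by_cases htwo : ∃ u v, A * u ^ 2 + B * u + C = 0 ∧ A * v ^ 2 + B * v + C = 0 ∧ u ≠ v
  · obtain ⟨u, v, hu, hv, huv⟩ := htwo
    refine ⟨u, v, fun w hw => ?_⟩
    by_contra hwuv
    simp only [Set.mem_insert_iff, Set.mem_singleton_iff, not_or] at hwuv
    exact h (quadratic_coeffs_eq_zero_of_three_roots huv (Ne.symm hwuv.1) (Ne.symm hwuv.2)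
      hu hv hw)
  · push Not at htwo
    by_cases hone : ∃ u, A * u ^ 2 + B * u + C = 0
    · obtain ⟨u, hu⟩ := hone
      exact ⟨u, u, fun w hw => Or.inl (htwo w u hw hu)⟩
    · push Not at hone
      exact ⟨0, 0, fun w hw => absurd hw (hone w)⟩

lemma hasDerivAt_quadratic {𝕜 : Type*} [NontriviallyNormedField 𝕜] (A B C x : 𝕜) :
    HasDerivAt (fun x => A * x ^ 2 + B * x + C) (2 * A * x + B) x := by
  refine (((hasDerivAt_pow 2 x).const_mul A).add ((hasDerivAt_id' x).const_mul B)).add_const C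
    |>.congr_deriv ?_
  push_cast
  ring

lemma hasDerivAt_shape_comb (p q r γ : ℝ) :
    HasDerivAt (fun γ => J₁ γ * p + J₂ γ * q + J₃ γ * r)
      ((4 * γ - 3) * p + (4 * γ - 1) * q + (4 - 8 * γ) * r) γ := by
  have hcomb : (fun γ => J₁ γ * p + J₂ γ * q + J₃ γ * r) =
      fun γ => (2 * p + 2 * q - 4 * r) * γ ^ 2 + (-3 * p - q + 4 * r) * γ + p := by
    funext γ
    simp only [J₁, J₂, J₃]
    ring
  rw [hcomb]
  exact (hasDerivAt_quadratic _ _ p γ).congr_deriv (by ring)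

lemma ex_eq_shape_comb (a b c : ℝ × ℝ) :
    ex a b c = fun γ => J₁ γ * a.1 + J₂ γ * b.1 + J₃ γ * c.1 := by
  funext γ
  simp [ex, e]

lemma ey_eq_shape_comb (a b c : ℝ × ℝ) :
    ey a b c = fun γ => J₁ γ * a.2 + J₂ γ * b.2 + J₃ γ * c.2 := by
  funext γ
  simp [ey, e]

def cross (p q : ℝ × ℝ) : ℝ := p.1 * q.2 - p.2 * q.1

lemma ex_mul_deriv_ey_sub_ey_mul_deriv_ex (a b c : ℝ × ℝ) (γ : ℝ) :
    ex a b c γ * deriv (ey a b c) γ - ey a b c γ * deriv (ex a b c) γ =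
      4 * (cross a c - cross a b - cross b c) * γ ^ 2 + 4 * (cross a b - 2 * cross a c) * γ
        + (4 * cross a c - cross a b) := by
  rw [ex_eq_shape_comb, ey_eq_shape_comb, (hasDerivAt_shape_comb a.1 b.1 c.1 γ).deriv,
    (hasDerivAt_shape_comb a.2 b.2 c.2 γ).deriv]
  simp only [J₁, J₂, J₃, cross]
  ring

/-- A quadratic edge has at most two tangent points whose tangent line passes
through the origin, provided the three pairwise determinants of the edge nodes
are not all zero. -/
theorem at_most_two_origin_tangents (a b c : ℝ × ℝ)
    (h : ¬ (a.1 * b.2 - a.2 * b.1 = 0 ∧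
            a.1 * c.2 - a.2 * c.1 = 0 ∧
            b.1 * c.2 - b.2 * c.1 = 0)) :
    ∃ γ₁ γ₂ : ℝ,
      {γ : ℝ |
        ex a b c γ * deriv (ey a b c) γ = ey a b c γ * deriv (ex a b c) γ}
        ⊆ {γ₁, γ₂} := by
  have hcoeffs : ¬ (4 * (cross a c - cross a b - cross b c) = 0 ∧
      4 * (cross a b - 2 * cross a c) = 0 ∧ 4 * cross a c - cross a b = 0) := by
    rintro ⟨h₂, h₁, h₀⟩
    simp only [cross] at h₂ h₁ h₀
    exact h ⟨by linarith, by linarith, by linarith⟩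
  obtain ⟨γ₁, γ₂, hsub⟩ := exists_roots_subset_pair_of_quadratic hcoeffs
  refine ⟨γ₁, γ₂, fun γ hγ => hsub ?_⟩
  rw [Set.mem_ofPred_eq, ← ex_mul_deriv_ey_sub_ey_mul_deriv_ex, sub_eq_zero]
  exact hγ
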